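/- A language L ⊆ 𝔸* is NOFRA-recognizable if and only if it is positive and NOFA-recognizable. -/

import Mathlib

abbrev Atom := ℕ

/-- A finite renaming. -/
def IsRenaming (ρ : Atom → Atom) : Prop := ({a | ρ a ≠ a} : Set Atom).Finite

/-- A language is positive if closed under letterwise application of all finite renamings. -/
def Positive (L : Set (List Atom)) : Prop :=
  ∀ ρ : Atom → Atom, IsRenaming ρ → ∀ w ∈ L, w.map ρ ∈ L

/-- The group `Perm(𝔸)` of finite permutations, as a subgroup of `Equiv.Perm 𝔸`. -/
def FinPerm : Subgroup (Equiv.Perm Atom) where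
  carrier := {π | ({a | π a ≠ a} : Set Atom).Finite}
  one_mem' := by
    have h : {a : Atom | (1 : Equiv.Perm Atom) a ≠ a} = ∅ := by ext a; simp
    show ({a : Atom | (1 : Equiv.Perm Atom) a ≠ a} : Set Atom).Finite
    rw [h]; exact Set.finite_empty
  mul_mem' := by
    intro π σ hπ hσ
    refine Set.Finite.subset (Set.Finite.union hπ hσ) ?_
    intro a ha
    simp only [Set.mem_setOf_eq, Set.mem_union] at *
    by_contra h
    push_neg at h
    exact ha (by rw [Equiv.Perm.mul_apply, h.2, h.1])
  inv_mem' := by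
    intro π hπ
    refine Set.Finite.subset hπ ?_
    intro a ha
    simp only [Set.mem_setOf_eq] at *
    intro h
    have h2 : π⁻¹ (π a) = π⁻¹ a := congrArg _ h
    rw [show π⁻¹ (π a) = a from π.symm_apply_apply a] at h2
    exact ha h2.symm

/-- The monoid `Fin(𝔸)` of finite renamings, as a submonoid of `Function.End 𝔸`. -/
def FinRen : Submonoid (Function.End Atom) where
  carrier := {ρ | ({a | ρ a ≠ a} : Set Atom).Finite}
  one_mem' := by
    have h : {a : Atom | (1 : Function.End Atom) a ≠ a} = ∅ := by
      ext a
      simp only [Set.mem_setOf_eq, Set.mem_empty_iff_false, iff_false, not_not]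
      rfl
    show ({a : Atom | (1 : Function.End Atom) a ≠ a} : Set Atom).Finite
    rw [h]; exact Set.finite_empty
  mul_mem' := by
    intro f g hf hg
    refine Set.Finite.subset (Set.Finite.union hf hg) ?_
    intro a ha
    simp only [Set.mem_setOf_eq, Set.mem_union] at *
    by_contra h
    push_neg at h
    exact ha (by show f (g a) = a; rw [h.2, h.1])

/-- Acceptance of a word from a state. -/
def Accepts {Q : Type*} (δ : Q → Atom → Q → Prop) (F : Set Q) : Q → List Atom → Prop
  | q, [] => q ∈ F
  | q, a :: w => ∃ q', δ q a q' ∧ Accepts δ F q' w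

/-- A nondeterministic orbit-finite nominal automaton (NOFA): an orbit-finite
nominal `Perm(𝔸)`-set of states together with equivariant transitions and
equivariant sets of initial and final states. -/
structure NOFA where
  Q : Type
  smul : FinPerm → Q → Q
  one_smul : ∀ q, smul 1 q = q
  mul_smul : ∀ π σ q, smul (π * σ) q = smul π (smul σ q)
  nominal : ∀ q : Q, ∃ S : Set Atom, S.Finite ∧
    ∀ π σ : FinPerm, (∀ a ∈ S, (π : Equiv.Perm Atom) a = (σ : Equiv.Perm Atom) a) →
      smul π q = smul σ q
  orbitFinite : Finite (Quot fun q q' : Q => ∃ π : FinPerm, smul π q = q')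
  δ : Q → Atom → Q → Prop
  I : Set Q
  F : Set Q
  equiv_δ : ∀ (π : FinPerm) q a q', δ q a q' →
    δ (smul π q) ((π : Equiv.Perm Atom) a) (smul π q')
  equiv_I : ∀ (π : FinPerm), ∀ q ∈ I, smul π q ∈ I
  equiv_F : ∀ (π : FinPerm), ∀ q ∈ F, smul π q ∈ F

/-- The language of a NOFA. -/
def NOFA.lang (A : NOFA) : Set (List Atom) :=
  {w | ∃ q₀ ∈ A.I, Accepts A.δ A.F q₀ w}

/-- A nondeterministic orbit-finite renaming automaton (NOFRA): the analogous
notion for the monoid `Fin(𝔸)` of finite renamings; orbit-finiteness is taken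
w.r.t. the underlying action of (finite) permutations, i.e. bijective renamings. -/
structure NOFRA where
  Q : Type
  smul : FinRen → Q → Q
  one_smul : ∀ q, smul 1 q = q
  mul_smul : ∀ ρ σ q, smul (ρ * σ) q = smul ρ (smul σ q)
  nominal : ∀ q : Q, ∃ S : Set Atom, S.Finite ∧
    ∀ ρ σ : FinRen, (∀ a ∈ S, (ρ : Function.End Atom) a = (σ : Function.End Atom) a) →
      smul ρ q = smul σ q
  orbitFinite : Finite (Quot fun q q' : Q =>
    ∃ ρ : FinRen, Function.Bijective (ρ : Function.End Atom) ∧ smul ρ q = q')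
  δ : Q → Atom → Q → Prop
  I : Set Q
  F : Set Q
  equiv_δ : ∀ (ρ : FinRen) q a q', δ q a q' →
    δ (smul ρ q) ((ρ : Function.End Atom) a) (smul ρ q')
  equiv_I : ∀ (ρ : FinRen), ∀ q ∈ I, smul ρ q ∈ I
  equiv_F : ∀ (ρ : FinRen), ∀ q ∈ F, smul ρ q ∈ F

/-- The language of a NOFRA. -/
def NOFRA.lang (A : NOFRA) : Set (List Atom) :=
  {w | ∃ q₀ ∈ A.I, Accepts A.δ A.F q₀ w}

/-!
A NOFRA is in particular a NOFA, and its language is closed under finite renamings because its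
transitions are equivariant under them.

Conversely, let `A` be a NOFA with a positive language. A state `q` of `A` can only be renamed
bijectively, so a non-injective renaming `ρ` is applied formally: the new states are pairs
`(ρ, q)`, where only the values of `ρ` on a support of `q` matter and `(ρ, q)` is identified
with `(ρ ∘ π⁻¹, π • q)`. Renamings act on the first component, and a transition `q -b-> q'` of
`A` becomes `(ρ, q) -ρ b-> (ρ, q')`. There are finitely many orbits, since each contains a pair
`(ρ, q)` with `q` one of the orbit representatives of `A` and `ρ` mapping a fixed support of `q`
into itself. Runs of `A` are runs from `(1, q)`; conversely, every word accepted from `(ρ, q)`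
is `τ v` for a word `v` accepted by `A` from `q` and a finite renaming `τ` agreeing with `ρ` on
a support of `q`, and positivity puts `τ v` back into the language. That this invariant does not
depend on the representative of the pair rests on the intersection of two finite supports being
a support, which holds because there are infinitely many atoms.
-/

open MulAction
open scoped Pointwise

def finPermToFinRen : FinPerm →* FinRen where
  toFun π := ⟨⇑(π : Equiv.Perm Atom), π.2⟩
  map_one' := rfl
  map_mul' _ _ := rfl

theorem finPermToFinRen_smul (π : FinPerm) (a : Atom) : finPermToFinRen π • a = π • a := rfl

theorem exists_finPerm_eqOn {V : Set Atom} (hV : V.Finite) {j : Atom → Atom}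
    (hj : Set.InjOn j V) : ∃ π : FinPerm, ∀ a ∈ V, π • a = j a := by
  classical
  let W : Finset Atom := hV.toFinset ∪ hV.toFinset.image j
  obtain ⟨g, hg⟩ := Set.MapsTo.exists_equiv_extend_of_card_eq (t := W) (s := {x : W | x.1 ∈ V})
    (f := fun x => j x) (by simp) (fun x hx => by simp [W]; exact Or.inr ⟨x, hx, rfl⟩)
    (fun x hx y hy hxy => Subtype.ext (hj hx hy hxy))
  refine ⟨⟨Equiv.Perm.ofSubtype g, ?_⟩, fun a ha => ?_⟩
  · refine W.finite_toSet.subset fun a ha => ?_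
    by_contra haW
    exact ha (Equiv.Perm.ofSubtype_apply_of_not_mem g haW)
  · have haW : a ∈ W := by simp [W, ha]
    exact (Equiv.Perm.ofSubtype_apply_of_mem g haW).trans (hg ⟨a, haW⟩ ha)

theorem exists_finPerm_fresh {S C Z : Set Atom} (hS : S.Finite) (hC : C.Finite)
    (hZ : Z.Finite) : ∃ π : FinPerm, (∀ a ∈ S, π • a = a) ∧ ∀ c ∈ C \ S, π • c ∉ Z := by
  obtain ⟨N, hN⟩ := ((hS.union hC).union hZ).bddAbove
  have hlt : ∀ {a}, a ∈ S ∪ C ∪ Z → a < N + 1 := fun ha => Nat.lt_succ_of_le (hN ha)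
  classical
  obtain ⟨π, hπ⟩ := exists_finPerm_eqOn (hS.union hC)
    (j := fun a => if a ∈ S then a else a + (N + 1)) (by
      intro a ha b hb hab
      have := hlt (Or.inl ha)
      have := hlt (Or.inl hb)
      simp only at hab
      split_ifs at hab <;> lia)
  refine ⟨π, fun a ha => by simp [hπ _ (Or.inl ha), ha], fun c ⟨hcC, hcS⟩ hcZ => ?_⟩
  have hc : π • c = c + (N + 1) := by simpa [hcS] using hπ _ (Or.inr hcC)
  have := hlt (Or.inr hcZ)
  lia

theorem exists_finPerm_mapsTo {S : Set Atom} (hS : S.Finite) (f : Atom → Atom) :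
    ∃ σ : FinPerm, ∀ a ∈ S, σ • f a ∈ S := by
  obtain ⟨σ, hσ⟩ := exists_finPerm_eqOn (hS.image f) (Function.invFunOn_injOn_image f S)
  exact ⟨σ, fun a ha => hσ (f a) ⟨a, ha, rfl⟩ ▸ Function.invFunOn_mem ⟨a, ha, rfl⟩⟩

theorem exists_smul_eq_of_quot_mk_eq {G X : Type*} [Group G] [MulAction G X] {x y : X}
    (h : Quot.mk (fun x y : X => ∃ g : G, g • x = y) x = Quot.mk _ y) : ∃ g : G, g • x = y := by
  refine (Equivalence.eqvGen_iff ⟨fun x => ⟨1, one_smul G x⟩, ?_, ?_⟩).1 (Quot.eqvGen_exact h)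
  · rintro x y ⟨g, rfl⟩
    exact ⟨g⁻¹, inv_smul_smul g x⟩
  · rintro x y z ⟨g, rfl⟩ ⟨g', rfl⟩
    exact ⟨g' * g, mul_smul g' g x⟩

namespace MulAction.Supports

variable {G α β : Type*} [Group G] [MulAction G α] [MulAction G β] {s : Set α} {b : β}

theorem smul_eq_smul (h : Supports G s b) {g g' : G} (hgg' : ∀ a ∈ s, g • a = g' • a) :
    g • b = g' • b := by
  have := h (g'⁻¹ * g) fun a ha => by rw [mul_smul, hgg' a ha, inv_smul_smul]
  rwa [mul_smul, inv_smul_eq_iff] at this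

theorem smul' (h : Supports G s b) (g : G) : Supports G (g • s) (g • b) := by
  intro g' hg'
  have := h (g⁻¹ * g' * g) fun a ha => by
    rw [mul_smul, mul_smul, hg' (Set.smul_mem_smul_set ha), inv_smul_smul]
  rwa [mul_smul, mul_smul, inv_smul_eq_iff] at this

end MulAction.Supports

-- `σ • t` is a support of `b` meeting `s` only in `s ∩ t` and avoiding `π • s` outside `s`,
-- so `π` on `s` and the identity on `σ • t` combine into one permutation `π'`.
theorem MulAction.Supports.inter {β : Type*} [MulAction FinPerm β] {s t : Set Atom} {b : β}
    (hsb : Supports FinPerm s b) (htb : Supports FinPerm t b) (hs : s.Finite) (ht : t.Finite) :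
    Supports FinPerm (s ∩ t) b := by
  classical
  intro π hπ
  obtain ⟨σ, hσs, hσt⟩ := exists_finPerm_fresh hs ht (hs.union (hs.smul_set (a := π)))
  have htb' : Supports FinPerm (σ • t) b := hsb σ hσs ▸ htb.smul' σ
  have hmem_t : ∀ y ∈ σ • t, y ∈ s → y ∈ t := by
    intro y hy hys
    obtain ⟨c, hc, rfl⟩ := Set.mem_smul_set.1 hy
    by_cases hcs : c ∈ s
    · rwa [hσs c hcs]
    · exact absurd (Or.inl hys) (hσt c ⟨hc, hcs⟩)
  have hnot_mem : ∀ y ∈ σ • t, y ∉ s → y ∉ π • s := by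
    intro y hy hys
    obtain ⟨c, hc, rfl⟩ := Set.mem_smul_set.1 hy
    by_cases hcs : c ∈ s
    · exact absurd (by rwa [hσs c hcs]) hys
    · exact fun h => hσt c ⟨hc, hcs⟩ (Or.inr h)
  obtain ⟨π', hπ'⟩ := exists_finPerm_eqOn (hs.union (ht.smul_set (a := σ)))
    (j := s.piecewise (π • ·) id) <| by
      rintro x hx y hy hxy
      by_cases hxs : x ∈ s <;> by_cases hys : y ∈ s <;>
        simp only [Set.piecewise_eq_of_mem, Set.piecewise_eq_of_notMem, hxs, hys, id,
          not_false_eq_true] at hxy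
      · exact smul_left_cancel_iff π |>.1 hxy
      · exact absurd (Set.mem_smul_set.2 ⟨x, hxs, hxy⟩) (hnot_mem y (hy.resolve_left hys) hys)
      · exact absurd (Set.mem_smul_set.2 ⟨y, hys, hxy.symm⟩)
          (hnot_mem x (hx.resolve_left hxs) hxs)
      · exact hxy
  calc π • b = π' • b := hsb.smul_eq_smul fun a ha => by simp [hπ' a (Or.inl ha), ha]
    _ = b := htb' π' fun y hy => by
      rw [hπ' _ (Or.inr hy)]
      by_cases hys : y ∈ s
      · simpa [hys] using hπ ⟨hys, hmem_t y hy hys⟩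
      · simp [hys]

theorem IsRenaming.comp {f g : Atom → Atom} (hf : IsRenaming f) (hg : IsRenaming g) :
    IsRenaming (f ∘ g) :=
  (hf.union hg).subset fun a ha => by
    by_contra h
    obtain ⟨hfa, hga⟩ := not_or.1 h
    exact ha (show f (g a) = a by rw [of_not_not hga, of_not_not hfa])

theorem IsRenaming.piecewise {f g : Atom → Atom} (hf : IsRenaming f) (hg : IsRenaming g)
    (s : Set Atom) [DecidablePred (· ∈ s)] : IsRenaming (s.piecewise f g) :=
  (hf.union hg).subset fun a ha => by
    by_cases has : a ∈ s
    · exact Or.inl (by simpa [has] using ha)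
    · exact Or.inr (by simpa [has] using ha)

theorem Accepts.map {Q Q' : Type*} {δ : Q → Atom → Q → Prop} {F : Set Q}
    {δ' : Q' → Atom → Q' → Prop} {F' : Set Q'} (φ : Q → Q') (f : Atom → Atom)
    (hδ : ∀ q a q', δ q a q' → δ' (φ q) (f a) (φ q')) (hF : ∀ q ∈ F, φ q ∈ F') :
    ∀ {w : List Atom} {q : Q}, Accepts δ F q w → Accepts δ' F' (φ q) (w.map f)
  | [], _, h => hF _ h
  | _ :: _, _, ⟨q', hq, h⟩ => ⟨φ q', hδ _ _ _ hq, Accepts.map φ f hδ hF h⟩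

namespace NOFRA

variable (B : NOFRA)

theorem positive_lang : Positive B.lang := by
  rintro ρ hρ w ⟨q, hq, hw⟩
  exact ⟨B.smul ⟨ρ, hρ⟩ q, B.equiv_I _ q hq,
    hw.map (B.smul ⟨ρ, hρ⟩) ρ (B.equiv_δ ⟨ρ, hρ⟩) (B.equiv_F _)⟩

def toNOFA : NOFA where
  Q := B.Q
  smul π := B.smul (finPermToFinRen π)
  one_smul := B.one_smul
  mul_smul π σ := B.mul_smul (finPermToFinRen π) (finPermToFinRen σ)
  nominal q := by
    obtain ⟨S, hS, hSq⟩ := B.nominal q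
    exact ⟨S, hS, fun π σ h => hSq _ _ h⟩
  orbitFinite := by
    refine @Finite.of_surjective _ _ B.orbitFinite (Quot.map id ?_)
      (Quot.ind fun q => ⟨Quot.mk _ q, rfl⟩)
    rintro _ _ ⟨ρ, hρ, h⟩
    exact ⟨⟨Equiv.ofBijective _ hρ, ρ.2⟩, h⟩
  δ := B.δ
  I := B.I
  F := B.F
  equiv_δ π := B.equiv_δ (finPermToFinRen π)
  equiv_I π := B.equiv_I (finPermToFinRen π)
  equiv_F π := B.equiv_F (finPermToFinRen π)

theorem toNOFA_lang : B.toNOFA.lang = B.lang := rfl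

end NOFRA

namespace NOFA

instance (A : NOFA) : MulAction FinPerm A.Q where
  smul := A.smul
  one_smul := A.one_smul
  mul_smul := A.mul_smul

variable {A : NOFA}

theorem exists_finite_supports (q : A.Q) : ∃ S : Set Atom, S.Finite ∧ Supports FinPerm S q := by
  obtain ⟨S, hS, hSq⟩ := A.nominal q
  exact ⟨S, hS, fun π hπ => (hSq π 1 hπ).trans (A.one_smul q)⟩

theorem accepts_smul (π : FinPerm) {q : A.Q} {w : List Atom} (h : Accepts A.δ A.F q w) :
    Accepts A.δ A.F (π • q) (w.map (π • ·)) :=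
  h.map (π • ·) (π • ·) (A.equiv_δ π) (A.equiv_F π)

def RenamedRel (A : NOFA) (p p' : FinRen × A.Q) : Prop :=
  ∃ (π : FinPerm) (S : Set Atom), S.Finite ∧ Supports FinPerm S p.2 ∧ p'.2 = π • p.2 ∧
    ∀ a ∈ S, p.1 • a = p'.1 • π • a

/-- `Quot.mk _ (ρ, q)` stands for the state `q` renamed by `ρ`. -/
def RenamedState (A : NOFA) : Type := Quot A.RenamedRel

theorem RenamedRel.symm {p p' : FinRen × A.Q} (h : A.RenamedRel p p') : A.RenamedRel p' p := by
  obtain ⟨π, S, hS, hSq, hq, hρ⟩ := h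
  refine ⟨π⁻¹, π • S, hS.smul_set, hq ▸ hSq.smul' π, by rw [hq, inv_smul_smul], ?_⟩
  rintro _ ⟨a, ha, rfl⟩
  rw [inv_smul_smul, hρ a ha]

namespace RenamedState

theorem mk_eq_mk_of_eqOn {S : Set Atom} (hS : S.Finite) {q : A.Q}
    (hSq : Supports FinPerm S q) {ρ ρ' : FinRen} (h : ∀ a ∈ S, ρ • a = ρ' • a) :
    (Quot.mk _ (ρ, q) : A.RenamedState) = Quot.mk _ (ρ', q) :=
  Quot.sound ⟨1, S, hS, hSq, (MulAction.one_smul q).symm, fun a ha => by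
    rw [MulAction.one_smul, h a ha]⟩

theorem mk_eq_mk_smul (ρ : FinRen) (q : A.Q) (π : FinPerm) :
    (Quot.mk _ (ρ, q) : A.RenamedState) = Quot.mk _ (ρ * finPermToFinRen π⁻¹, π • q) := by
  obtain ⟨S, hS, hSq⟩ := exists_finite_supports q
  exact Quot.sound ⟨π, S, hS, hSq, rfl, fun a _ => by
    rw [← smul_smul, finPermToFinRen_smul, inv_smul_smul]⟩

def smul (ρ : FinRen) : A.RenamedState → A.RenamedState :=
  Quot.map (fun p => (ρ * p.1, p.2)) fun _ _ ⟨π, S, hS, hSq, hq, h⟩ =>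
    ⟨π, S, hS, hSq, hq, fun a ha => by simp only [← smul_smul, h a ha]⟩

theorem exists_finite_support (x : A.RenamedState) :
    ∃ S : Set Atom, S.Finite ∧ ∀ ρ σ : FinRen,
      (∀ a ∈ S, (ρ : Function.End Atom) a = (σ : Function.End Atom) a) → smul ρ x = smul σ x := by
  induction x using Quot.ind with | mk p => ?_
  obtain ⟨S, hS, hSq⟩ := exists_finite_supports p.2
  refine ⟨p.1 • S, hS.smul_set, fun ρ σ h => mk_eq_mk_of_eqOn hS hSq fun a ha => ?_⟩
  simp only [← smul_smul]
  exact h _ (Set.smul_mem_smul_set ha)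

theorem finite_orbits :
    Finite (Quot fun x y : A.RenamedState =>
      ∃ ρ : FinRen, Function.Bijective (ρ : Function.End Atom) ∧ smul ρ x = y) := by
  classical
  have := A.orbitFinite
  choose S hS hSq using fun c : Quot (fun q q' : A.Q => ∃ π : FinPerm, π • q = q') =>
    exists_finite_supports c.out
  have := fun c => (hS c).to_subtype
  let ext (c) (e : S c → S c) : FinRen := ⟨fun a => if h : a ∈ S c then e ⟨a, h⟩ else a,
    (hS c).subset fun a ha => by by_contra h; exact ha (dif_neg h)⟩
  refine Finite.of_surjective (fun ce : Σ c, S c → S c =>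
    Quot.mk _ (Quot.mk _ (ext ce.1 ce.2, ce.1.out))) ?_
  rintro ⟨⟨ρ, q⟩⟩
  set c := Quot.mk (fun q q' : A.Q => ∃ π : FinPerm, π • q = q') q
  obtain ⟨π, hπ⟩ : ∃ π : FinPerm, π • q = c.out := exists_smul_eq_of_quot_mk_eq c.out_eq.symm
  set ρ' := ρ * finPermToFinRen π⁻¹
  obtain ⟨σ, hσ⟩ := exists_finPerm_mapsTo (hS c) (ρ' • ·)
  refine ⟨⟨c, fun a => ⟨σ • ρ' • a.1, hσ a a.2⟩⟩, ?_⟩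
  calc _ = Quot.mk _ (Quot.mk _ (finPermToFinRen σ * ρ', c.out)) :=
        congrArg _ (mk_eq_mk_of_eqOn (hS c) (hSq c) fun a ha => dif_pos ha)
    _ = Quot.mk _ (Quot.mk _ (ρ', c.out)) :=
        (Quot.sound ⟨finPermToFinRen σ, σ.1.bijective, rfl⟩).symm
    _ = _ := congrArg _ (hπ ▸ mk_eq_mk_smul ρ q π).symm

end RenamedState

def toNOFRA (A : NOFA) : NOFRA where
  Q := A.RenamedState
  smul := RenamedState.smul
  one_smul := Quot.ind fun p => congrArg (Quot.mk _ ·) (Prod.ext (one_mul p.1) rfl)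
  mul_smul ρ σ := Quot.ind fun p => congrArg (Quot.mk _ ·) (Prod.ext (mul_assoc ρ σ p.1) rfl)
  nominal := RenamedState.exists_finite_support
  orbitFinite := RenamedState.finite_orbits
  δ x a y := ∃ (ρ : FinRen) (q q' : A.Q) (b : Atom),
    x = Quot.mk _ (ρ, q) ∧ y = Quot.mk _ (ρ, q') ∧ a = ρ • b ∧ A.δ q b q'
  I := {x | ∃ (ρ : FinRen) (q : A.Q), x = Quot.mk _ (ρ, q) ∧ q ∈ A.I}
  F := {x | ∃ (ρ : FinRen) (q : A.Q), x = Quot.mk _ (ρ, q) ∧ q ∈ A.F}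
  equiv_δ ρ := by
    rintro _ _ _ ⟨ρ₀, q, q', b, rfl, rfl, rfl, h⟩
    exact ⟨ρ * ρ₀, q, q', b, rfl, rfl, rfl, h⟩
  equiv_I ρ := by
    rintro _ ⟨ρ₀, q, rfl, hq⟩
    exact ⟨ρ * ρ₀, q, rfl, hq⟩
  equiv_F ρ := by
    rintro _ ⟨ρ₀, q, rfl, hq⟩
    exact ⟨ρ * ρ₀, q, rfl, hq⟩

def AcceptsRenamedOn (A : NOFA) (S : Set Atom) (ρ : FinRen) (q : A.Q) (w : List Atom) : Prop :=
  ∃ (τ : Atom → Atom) (v : List Atom),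
    IsRenaming τ ∧ (∀ a ∈ S, τ a = ρ • a) ∧ Accepts A.δ A.F q v ∧ w = v.map τ

namespace AcceptsRenamedOn

variable {S : Set Atom} {ρ : FinRen} {q : A.Q} {w : List Atom}

theorem mono (h : A.AcceptsRenamedOn S ρ q w) {S' : Set Atom} (hS' : S' ⊆ S) :
    A.AcceptsRenamedOn S' ρ q w :=
  let ⟨τ, v, hτ, hτρ, hv, hw⟩ := h
  ⟨τ, v, hτ, fun a ha => hτρ a (hS' ha), hv, hw⟩

theorem congr (h : A.AcceptsRenamedOn S ρ q w) {ρ' : FinRen} (hρ : ∀ a ∈ S, ρ • a = ρ' • a) :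
    A.AcceptsRenamedOn S ρ' q w :=
  let ⟨τ, v, hτ, hτρ, hv, hw⟩ := h
  ⟨τ, v, hτ, fun a ha => (hτρ a ha).trans (hρ a ha), hv, hw⟩

theorem smul (h : A.AcceptsRenamedOn S ρ q w) (π : FinPerm) :
    A.AcceptsRenamedOn (π • S) (ρ * finPermToFinRen π⁻¹) (π • q) w := by
  obtain ⟨τ, v, hτ, hτρ, hv, rfl⟩ := h
  refine ⟨τ ∘ (π⁻¹ • ·), v.map (π • ·), hτ.comp (π⁻¹).2, ?_, accepts_smul π hv,
    by simp [List.map_map, Function.comp_def]⟩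
  rintro _ ⟨a, ha, rfl⟩
  simp [hτρ a ha, ← smul_smul, finPermToFinRen_smul]

theorem cons {S' : Set Atom} {q' : A.Q} {b : Atom} (h : A.AcceptsRenamedOn S' ρ q' w)
    (hS : S.Finite) (hS' : S'.Finite) (hS'q' : Supports FinPerm S' q') (hδ : A.δ q b q') :
    A.AcceptsRenamedOn S ρ q (ρ • b :: w) := by
  classical
  obtain ⟨τ, v, hτ, hτρ, hv, rfl⟩ := h
  -- Move the letters of `v` outside `S'` away from `S ∪ {b}`, where the new renaming must be `ρ`.
  obtain ⟨π, hπS', hπv⟩ := exists_finPerm_fresh hS' v.finite_toSet (hS.insert b)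
  have hv' : Accepts A.δ A.F q' (v.map (π • ·)) := hS'q' π hπS' ▸ accepts_smul π hv
  refine ⟨(insert b S).piecewise (ρ • ·) (τ ∘ (π⁻¹ • ·)), b :: v.map (π • ·),
    IsRenaming.piecewise ρ.2 (hτ.comp (π⁻¹).2) _,
    fun a ha => Set.piecewise_eq_of_mem _ _ _ (Set.mem_insert_of_mem b ha), ⟨q', hδ, hv'⟩, ?_⟩
  simp only [List.map_cons, List.map_map, Set.piecewise_eq_of_mem _ _ _ (Set.mem_insert b S)]
  refine congrArg _ (List.map_congr_left fun c hc => ?_)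
  by_cases hcS : π • c ∈ insert b S
  · have hcS' : c ∈ S' := by_contra fun h => hπv c ⟨hc, h⟩ hcS
    rw [hπS' c hcS'] at hcS
    show τ c = (insert b S).piecewise (ρ • ·) (τ ∘ (π⁻¹ • ·)) (π • c)
    rw [hπS' c hcS', Set.piecewise_eq_of_mem _ _ _ hcS, hτρ c hcS']
  · simp [Set.piecewise_eq_of_notMem _ _ _ hcS]

end AcceptsRenamedOn

def AcceptsRenamed (A : NOFA) (p : FinRen × A.Q) (w : List Atom) : Prop :=
  ∃ S : Set Atom, S.Finite ∧ Supports FinPerm S p.2 ∧ A.AcceptsRenamedOn S p.1 p.2 w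

theorem AcceptsRenamed.of_renamedRel {p p' : FinRen × A.Q} {w : List Atom}
    (h : A.AcceptsRenamed p w) (hpp' : A.RenamedRel p p') : A.AcceptsRenamed p' w := by
  obtain ⟨π, S₀, hS₀, hS₀q, hq, hρ⟩ := hpp'
  obtain ⟨S, hS, hSq, h⟩ := h
  -- `ρ` agrees with `ρ' ∘ π` only on `S₀`, hence the passage to the support `S ∩ S₀`.
  refine ⟨π • (S ∩ S₀), (hS.inter_of_left _).smul_set, hq ▸ (hSq.inter hS₀q hS hS₀).smul' π,
    hq ▸ ((h.mono Set.inter_subset_left).smul π).congr ?_⟩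
  rintro _ ⟨a, ha, rfl⟩
  rw [← smul_smul, finPermToFinRen_smul, inv_smul_smul, hρ a ha.2]

theorem acceptsRenamed_congr {p p' : FinRen × A.Q}
    (h : (Quot.mk _ p : A.RenamedState) = Quot.mk _ p') (w : List Atom) :
    A.AcceptsRenamed p w ↔ A.AcceptsRenamed p' w :=
  Eq.to_iff <| congrArg (Quot.lift (A.AcceptsRenamed · w) fun _ _ hr =>
    propext ⟨fun h => h.of_renamedRel hr, fun h => h.of_renamedRel hr.symm⟩) h

theorem acceptsRenamed_of_accepts :
    ∀ {w : List Atom} {p : FinRen × A.Q},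
      Accepts A.toNOFRA.δ A.toNOFRA.F (Quot.mk _ p) w → A.AcceptsRenamed p w
  | [], _, ⟨ρ, q, hp, hq⟩ => by
    obtain ⟨S, hS, hSq⟩ := exists_finite_supports q
    exact (acceptsRenamed_congr hp []).2 ⟨S, hS, hSq, (ρ • ·), [], ρ.2, fun _ _ => rfl, hq, rfl⟩
  | _ :: _, _, ⟨_, ⟨ρ, q, q', b, hp, rfl, rfl, hδ⟩, hw⟩ => by
    obtain ⟨S', hS', hS'q', h⟩ := acceptsRenamed_of_accepts hw
    obtain ⟨S, hS, hSq⟩ := exists_finite_supports q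
    exact (acceptsRenamed_congr hp _).2 ⟨S, hS, hSq, h.cons hS hS' hS'q' hδ⟩

theorem toNOFRA_lang (hA : Positive A.lang) : A.toNOFRA.lang = A.lang := by
  ext w
  constructor
  · rintro ⟨_, ⟨ρ, q, rfl, hq⟩, hw⟩
    obtain ⟨-, -, -, τ, v, hτ, -, hv, rfl⟩ := acceptsRenamed_of_accepts hw
    exact hA τ hτ v ⟨q, hq, hv⟩
  · rintro ⟨q, hq, hw⟩
    refine ⟨Quot.mk _ (1, q), ⟨1, q, rfl, hq⟩, ?_⟩
    simpa using hw.map (δ' := A.toNOFRA.δ) (F' := A.toNOFRA.F) (fun q => Quot.mk _ (1, q)) id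
      (fun q a q' h => ⟨1, q, q', a, rfl, rfl, rfl, h⟩) fun q hq => ⟨1, q, rfl, hq⟩

end NOFA

/-- a data language is NOFRA-recognizable iff it is positive
and NOFA-recognizable. -/
theorem nofra_recognizable_iff_positive_nofa (L : Set (List Atom)) :
    (∃ A : NOFRA, A.lang = L) ↔ (Positive L ∧ ∃ A : NOFA, A.lang = L) := by
  constructor
  · rintro ⟨B, rfl⟩
    exact ⟨B.positive_lang, B.toNOFA, B.toNOFA_lang⟩
  · rintro ⟨hL, A, rfl⟩
    exact ⟨A.toNOFRA, A.toNOFRA_lang hL⟩
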